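/- The Weyl group generated by the reflections σ_α for roots α acts transitively on the set of rulings in ℤ^{r+1}, for 4 ≤ r ≤ 8. -/
import Mathlib


/-- The Del Pezzo intersection form on `ℤ^{r+1}`: `(l_0,l_0)=1`, `(l_i,l_i)=-1` for `i ≥ 1`,
`(l_i,l_j)=0` for `i ≠ j`. -/
def dpB {r : ℕ} (x y : Fin (r + 1) → ℤ) : ℤ :=
  x 0 * y 0 - ∑ i : Fin r, x i.succ * y i.succ

/-- The anticanonical class `-K = 3 l_0 - l_1 - ⋯ - l_r`. -/
def negK {r : ℕ} : Fin (r + 1) → ℤ := fun i => if i = 0 then 3 else -1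

/-- The standard basis vector `l_i`. -/
def l {r : ℕ} (i : Fin (r + 1)) : Fin (r + 1) → ℤ := fun j => if j = i then 1 else 0

/-- An exceptional class: `(E,E) = -1` and `(E,-K) = 1`. -/
def IsExc {r : ℕ} (E : Fin (r + 1) → ℤ) : Prop := dpB E E = -1 ∧ dpB E negK = 1

/-- A root: `(α,α) = -2` and `(α,-K) = 0`. -/
def IsRoot {r : ℕ} (a : Fin (r + 1) → ℤ) : Prop := dpB a a = -2 ∧ dpB a negK = 0

/-- A ruling: `(D,D) = 0` and `(D,-K) = 2`. -/
def IsRuling {r : ℕ} (D : Fin (r + 1) → ℤ) : Prop := dpB D D = 0 ∧ dpB D negK = 2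

/-- The reflection `σ_α(x) = x + (x,α) α`. -/
def reflct {r : ℕ} (a x : Fin (r + 1) → ℤ) : Fin (r + 1) → ℤ :=
  fun i => x i + dpB x a * a i

lemma dpB_add_smul_left {r : ℕ} (x a y : Fin (r+1) → ℤ) (s : ℤ) :
    dpB (fun i => x i + s * a i) y = dpB x y + s * dpB a y := by
  simp only [dpB]
  have h : (∑ i : Fin r, (x i.succ + s * a i.succ) * y i.succ)
      = (∑ i : Fin r, x i.succ * y i.succ) + s * ∑ i : Fin r, a i.succ * y i.succ := by
    rw [Finset.mul_sum, ← Finset.sum_add_distrib]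
    exact Finset.sum_congr rfl fun i _ => by ring
  rw [h]; ring

lemma dpB_comm {r : ℕ} (x y : Fin (r+1) → ℤ) : dpB x y = dpB y x := by
  simp only [dpB]
  rw [Finset.sum_congr rfl (fun i _ => mul_comm _ _)]
  ring

lemma dpB_reflct_left {r : ℕ} (a x y : Fin (r+1) → ℤ) :
    dpB (reflct a x) y = dpB x y + dpB x a * dpB a y :=
  dpB_add_smul_left x a y (dpB x a)

lemma reflct_isRuling {r : ℕ} (a D : Fin (r+1) → ℤ) (ha : IsRoot a) (hD : IsRuling D) :
    IsRuling (reflct a D) := by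
  obtain ⟨ha1, ha2⟩ := ha
  obtain ⟨hD1, hD2⟩ := hD
  have hB : dpB (reflct a D) a = - dpB D a := by
    rw [dpB_reflct_left, ha1]; ring
  constructor
  · rw [dpB_reflct_left a D (reflct a D), dpB_comm D (reflct a D), dpB_comm a (reflct a D),
      dpB_reflct_left, dpB_reflct_left, ha1, dpB_comm a D, hD1]
    ring
  · rw [dpB_reflct_left, hD2, ha2]; ring

lemma reflct_invol {r : ℕ} (a x : Fin (r+1) → ℤ) (ha : dpB a a = -2) :
    reflct a (reflct a x) = x := by
  have h : dpB (reflct a x) a = - dpB x a := by rw [dpB_reflct_left, ha]; ring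
  funext i
  show reflct a x i + dpB (reflct a x) a * a i = x i
  rw [h]
  show (x i + dpB x a * a i) + -dpB x a * a i = x i
  ring

lemma foldr_reverse_inv {r : ℕ} (L : List (Fin (r+1) → ℤ)) (hL : ∀ a ∈ L, IsRoot a)
    (x : Fin (r+1) → ℤ) :
    L.reverse.foldr (fun a x => reflct a x) (L.foldr (fun a x => reflct a x) x) = x := by
  induction L generalizing x with
  | nil => rfl
  | cons a T ih =>
    simp only [List.reverse_cons, List.foldr_append, List.foldr_cons, List.foldr_nil]
    rw [reflct_invol a _ ((hL a (by simp)).1)]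
    exact ih (fun b hb => hL b (by simp [hb])) x

lemma sum_split1 {n : ℕ} (f : Fin n → ℤ) (i : Fin n) :
    ∑ x, f x = f i + ∑ x ∈ Finset.univ.erase i, f x :=
  (Finset.add_sum_erase _ f (Finset.mem_univ i)).symm

lemma sum_split2 {n : ℕ} (f : Fin n → ℤ) (i j : Fin n) (hij : j ≠ i) :
    ∑ x, f x = f i + f j + ∑ x ∈ (Finset.univ.erase i).erase j, f x := by
  rw [sum_split1 f i, ← Finset.add_sum_erase _ f
    (Finset.mem_erase.2 ⟨hij, Finset.mem_univ j⟩)]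
  ring

lemma sum_split3 {n : ℕ} (f : Fin n → ℤ) (i j k : Fin n) (hij : j ≠ i) (hik : k ≠ i)
    (hjk : k ≠ j) :
    ∑ x, f x = f i + f j + f k + ∑ x ∈ ((Finset.univ.erase i).erase j).erase k, f x := by
  rw [sum_split2 f i j hij, ← Finset.add_sum_erase _ f
    (Finset.mem_erase.2 ⟨hjk, Finset.mem_erase.2 ⟨hik, Finset.mem_univ k⟩⟩)]
  ring

lemma ruling_sums {r : ℕ} (D : Fin (r+1) → ℤ) (hD : IsRuling D) :
    (∑ k : Fin r, D k.succ * D k.succ) = D 0 * D 0 ∧ (∑ k : Fin r, D k.succ) = 2 - 3 * D 0 := by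
  obtain ⟨h1, h2⟩ := hD
  simp only [dpB, negK, if_pos rfl, if_true] at h1 h2
  constructor
  · linarith
  · have h3 : (∑ k : Fin r, D k.succ * if (k.succ : Fin (r+1)) = 0 then (3:ℤ) else -1)
        = - ∑ k : Fin r, D k.succ := by
      rw [← Finset.sum_neg_distrib]
      exact Finset.sum_congr rfl fun k _ => by
        rw [if_neg (Fin.succ_ne_zero k)]; ring
    rw [h3] at h2
    linarith

lemma ruling_d0_pos {r : ℕ} (h2 : r ≤ 8) (D : Fin (r+1) → ℤ) (hD : IsRuling D) :
    1 ≤ D 0 := by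
  obtain ⟨hsq, hsum⟩ := ruling_sums D hD
  have hc := sq_sum_le_card_mul_sum_sq (s := Finset.univ) (f := fun k : Fin r => D k.succ)
  rw [hsum] at hc
  have hsq2 : (∑ k : Fin r, (D k.succ)^2) = D 0 * D 0 := by
    rw [← hsq]; exact Finset.sum_congr rfl fun k _ => sq (D k.succ) ▸ by ring
  rw [hsq2] at hc
  have hcard : (Finset.univ : Finset (Fin r)).card = r := by simp
  rw [hcard] at hc
  have hr : ((r : ℤ)) ≤ 8 := by exact_mod_cast h2
  have hDD : 0 ≤ D 0 * D 0 := mul_self_nonneg _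
  nlinarith [sq_nonneg (D 0)]

lemma ruling_coord_nonpos {r : ℕ} (h1 : 4 ≤ r) (h2 : r ≤ 8) (D : Fin (r+1) → ℤ)
    (hD : IsRuling D) (j : Fin r) : D j.succ ≤ 0 := by
  by_contra hcon
  push_neg at hcon
  have hc1 : 1 ≤ D j.succ := hcon
  have hd1 : 1 ≤ D 0 := ruling_d0_pos h2 D hD
  obtain ⟨hsq, hsum⟩ := ruling_sums D hD
  set s : Finset (Fin r) := Finset.univ.erase j with hs
  have hS' : (∑ x ∈ s, D x.succ) = 2 - 3 * D 0 - D j.succ := by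
    rw [← hsum, sum_split1 (fun k : Fin r => D k.succ) j]; ring
  have hQ' : (∑ x ∈ s, (D x.succ)^2) = D 0 * D 0 - D j.succ * D j.succ := by
    have : (∑ x ∈ s, (D x.succ)^2) = ∑ x ∈ s, D x.succ * D x.succ :=
      Finset.sum_congr rfl fun k _ => by ring
    rw [this, ← hsq, sum_split1 (fun k : Fin r => D k.succ * D k.succ) j]; ring
  have hc := sq_sum_le_card_mul_sum_sq (s := s) (f := fun k : Fin r => D k.succ)
  rw [hS', hQ'] at hc
  have hcard : (s.card : ℤ) ≤ 7 := by
    have : s.card = r - 1 := by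
      rw [hs, Finset.card_erase_of_mem (Finset.mem_univ j)]; simp
    rw [this]
    have : r - 1 ≤ 7 := by omega
    exact_mod_cast this
  have hQnn : (0:ℤ) ≤ D 0 * D 0 - D j.succ * D j.succ := by
    rw [← hQ']; positivity
  have hc7 : (2 - 3 * D 0 - D j.succ)^2 ≤ 7 * (D 0 * D 0 - D j.succ * D j.succ) :=
    le_trans hc (by nlinarith)
  nlinarith [sq_nonneg (2 * D 0 - 3), sq_nonneg (D j.succ - 1),
    mul_nonneg (sub_nonneg.2 hc1) (sub_nonneg.2 hd1), sq_nonneg (D 0 + D j.succ)]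

lemma exists_triple {r : ℕ} (h1 : 4 ≤ r) (h2 : r ≤ 8) (M : Fin r → ℤ)
    (hnn : ∀ k, 0 ≤ M k) (d0 : ℤ) (hd0 : 2 ≤ d0)
    (hsum : ∑ k, M k = 3 * d0 - 2) (hsq : ∑ k, M k * M k = d0 * d0) :
    ∃ i j k : Fin r, j ≠ i ∧ k ≠ i ∧ k ≠ j ∧ d0 < M i + M j + M k := by
  have hcu : (Finset.univ : Finset (Fin r)).card = r := by simp
  have hne0 : (Finset.univ : Finset (Fin r)).Nonempty := by
    rw [← Finset.card_pos, hcu]; omega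
  obtain ⟨i, _, hi⟩ := Finset.exists_max_image Finset.univ M hne0
  have hne1 : (Finset.univ.erase i).Nonempty := by
    rw [← Finset.card_pos, Finset.card_erase_of_mem (Finset.mem_univ i), hcu]; omega
  obtain ⟨j, hjm, hj⟩ := Finset.exists_max_image _ M hne1
  have hne2 : ((Finset.univ.erase i).erase j).Nonempty := by
    rw [← Finset.card_pos, Finset.card_erase_of_mem hjm,
      Finset.card_erase_of_mem (Finset.mem_univ i), hcu]; omega
  obtain ⟨k, hkm, hk⟩ := Finset.exists_max_image _ M hne2
  have hji : j ≠ i := (Finset.mem_erase.1 hjm).1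
  have hki : k ≠ i := (Finset.mem_erase.1 (Finset.mem_erase.1 hkm).2).1
  have hkj : k ≠ j := (Finset.mem_erase.1 hkm).1
  refine ⟨i, j, k, hji, hki, hkj, ?_⟩
  by_contra hcon
  push_neg at hcon
  set rest := ((Finset.univ.erase i).erase j).erase k with hrest
  set a := M i with hadef
  set b := M j with hbdef
  set c := M k with hcdef
  set S1 := ∑ x ∈ rest, M x with hS1def
  set S2 := ∑ x ∈ rest, M x * M x with hS2def
  have hdec1 : a + b + c + S1 = 3 * d0 - 2 := by
    rw [← hsum, sum_split3 M i j k hji hki hkj]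
  have hdec2 : a * a + b * b + c * c + S2 = d0 * d0 := by
    rw [← hsq, sum_split3 (fun x => M x * M x) i j k hji hki hkj]
  have hrestmem : ∀ x ∈ rest, M x ≤ c := fun x hx =>
    hk x (Finset.mem_erase.1 hx).2
  have hba : b ≤ a := hi j (Finset.mem_univ j)
  have hcb : c ≤ b := hj k (Finset.mem_erase.1 hkm).2
  have hc0 : 0 ≤ c := hnn k
  have hS1nn : 0 ≤ S1 := Finset.sum_nonneg fun x _ => hnn x
  have hS2c : S2 ≤ c * S1 := by
    rw [hS2def, hS1def, Finset.mul_sum]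
    exact Finset.sum_le_sum fun x hx =>
      mul_le_mul_of_nonneg_right (hrestmem x hx) (hnn x)
  have hS1c : S1 ≤ 5 * c := by
    have hcard : rest.card ≤ 5 := by
      rw [hrest, Finset.card_erase_of_mem hkm, Finset.card_erase_of_mem hjm,
        Finset.card_erase_of_mem (Finset.mem_univ i), hcu]
      omega
    calc S1 ≤ rest.card • c := Finset.sum_le_card_nsmul rest M c hrestmem
    _ = (rest.card : ℤ) * c := nsmul_eq_mul _ _
    _ ≤ 5 * c := by
        apply mul_le_mul_of_nonneg_right _ hc0
        exact_mod_cast hcard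
  have hP1 : 0 ≤ (a - c) * (b - c) :=
    mul_nonneg (by linarith) (by linarith)
  have hstep : d0 * d0 ≤ (a + b - c) * (a + b - c) + 2 * (c * c) + c * S1 := by
    nlinarith [hP1, hdec2, hS2c]
  have hP3 : 0 ≤ (d0 - (a + b + c)) * (d0 + (a + b + c) - 3 * c) :=
    mul_nonneg (by linarith) (by linarith)
  have hP2 : 0 ≤ c * ((a + b + c) - 3 * c) :=
    mul_nonneg hc0 (by linarith)
  have hc00 : c ≤ 0 := by nlinarith [hstep, hP2, hP3, hdec1]
  have hceq : c = 0 := le_antisymm hc00 hc0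
  have hS10 : S1 = 0 := by
    have := hS1c
    rw [hceq] at this
    linarith
  rw [hceq, hS10] at hdec1
  linarith

def Evec (r : ℕ) (p : Fin (r+1)) : Fin (r+1) → ℤ :=
  fun x => if x = 0 then 1 else if x = p then -1 else 0

lemma Evec_to_target {r : ℕ} (p q : Fin (r+1)) (hp : p ≠ 0) (hq : q ≠ 0) :
    ∃ L : List (Fin (r+1) → ℤ), (∀ a ∈ L, IsRoot a) ∧
      L.foldr (fun a x => reflct a x) (Evec r p) = Evec r q := by
  by_cases hpq : p = q
  · exact ⟨[], by simp, by simp [hpq]⟩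
  · obtain ⟨u, hu⟩ : ∃ u : Fin r, u.succ = p := by
      rcases Fin.eq_succ_of_ne_zero hp with ⟨u, hu⟩; exact ⟨u, hu.symm⟩
    obtain ⟨v, hv⟩ : ∃ v : Fin r, v.succ = q := by
      rcases Fin.eq_succ_of_ne_zero hq with ⟨v, hv⟩; exact ⟨v, hv.symm⟩
    have huv : v ≠ u := fun h => hpq (by rw [← hu, ← hv, h])
    set α : Fin (r+1) → ℤ := fun x => if x = p then 1 else if x = q then -1 else 0 with hα
    set gα : Fin r → ℤ := fun k => if k = u then 1 else if k = v then -1 else 0 with hgα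
    set gE : Fin r → ℤ := fun k => if k = u then -1 else 0 with hgE
    have hα0 : α 0 = 0 := by
      rw [hα]; simp only
      rw [if_neg (Ne.symm hp), if_neg (Ne.symm hq)]
    have hαg : ∀ k : Fin r, α k.succ = gα k := by
      intro k
      rw [hα, hgα]; simp only [← hu, ← hv, Fin.succ_inj]
    have hEg : ∀ k : Fin r, Evec r p k.succ = gE k := by
      intro k
      rw [Evec, hgE]; simp only [← hu, Fin.succ_inj]
      rw [if_neg (Fin.succ_ne_zero k)]
    have hrest : ∀ (f : Fin r → ℤ), (∀ x, x ≠ u → x ≠ v → f x = 0) →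
        ∑ x ∈ (Finset.univ.erase u).erase v, f x = 0 := by
      intro f hf
      apply Finset.sum_eq_zero
      intro x hx
      have h' := Finset.mem_erase.1 hx
      exact hf x (Finset.mem_erase.1 h'.2).1 h'.1
    have hroot : IsRoot α := by
      constructor
      · show α 0 * α 0 - (∑ k : Fin r, α k.succ * α k.succ) = -2
        rw [Finset.sum_congr rfl fun k _ => by rw [hαg k],
          sum_split2 (fun k => gα k * gα k) u v huv,
          hrest _ (fun x h1 h2 => by rw [hgα]; simp only; rw [if_neg h1, if_neg h2]; ring),
          hα0, hgα]
        simp [huv]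
      · show α 0 * negK 0 - (∑ k : Fin r, α k.succ * negK k.succ) = 0
        have e2 : (∑ k : Fin r, α k.succ * negK k.succ) = ∑ k : Fin r, gα k * (-1) :=
          Finset.sum_congr rfl fun k _ => by
            simp only [hαg k, negK, if_neg (Fin.succ_ne_zero k)]
        rw [e2,
          sum_split2 (fun k => gα k * (-1)) u v huv,
          hrest _ (fun x h1 h2 => by rw [hgα]; simp only; rw [if_neg h1, if_neg h2]; ring),
          hα0, hgα]
        simp [huv]
    have hs : dpB (Evec r p) α = 1 := by
      show Evec r p 0 * α 0 - (∑ k : Fin r, Evec r p k.succ * α k.succ) = 1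
      rw [Finset.sum_congr rfl fun k _ => by rw [hαg k, hEg k],
        sum_split2 (fun k => gE k * gα k) u v huv,
        hrest _ (fun x h1 h2 => by rw [hgα, hgE]; simp only; rw [if_neg h1]; ring),
        hα0, hgα, hgE]
      simp [huv]
    refine ⟨[α], by simp [hroot], ?_⟩
    show reflct α (Evec r p) = Evec r q
    funext x
    show Evec r p x + dpB (Evec r p) α * α x = Evec r q x
    rw [hs, one_mul, Evec, Evec, hα]
    simp only
    by_cases h0 : x = 0
    · simp only [if_pos h0, if_neg (h0 ▸ Ne.symm hp), if_neg (h0 ▸ Ne.symm hq)]; ring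
    · simp only [if_neg h0]
      by_cases hxp : x = p
      · simp only [if_pos hxp, if_neg (fun h : x = q => hpq (by rw [← hxp, h]))]; ring
      · simp only [if_neg hxp]
        by_cases hxq : x = q
        · simp only [if_pos hxq]; ring
        · simp only [if_neg hxq]; ring

lemma descent {r : ℕ} (h1 : 4 ≤ r) (h2 : r ≤ 8) (q : Fin (r+1)) (hq : q ≠ 0) :
    ∀ n : ℕ, ∀ D : Fin (r+1) → ℤ, IsRuling D → (D 0).toNat ≤ n →
      ∃ L : List (Fin (r+1) → ℤ), (∀ a ∈ L, IsRoot a) ∧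
        L.foldr (fun a x => reflct a x) D = Evec r q := by
  intro n
  induction n with
  | zero =>
    intro D hD hn
    exfalso
    have := ruling_d0_pos h2 D hD
    omega
  | succ n ih =>
    intro D hD hn
    have hd1 := ruling_d0_pos h2 D hD
    obtain ⟨hsq, hsum⟩ := ruling_sums D hD
    have hnp : ∀ k : Fin r, D k.succ ≤ 0 := ruling_coord_nonpos h1 h2 D hD
    by_cases hone : D 0 = 1
    · -- base case : D = Evec r i.succ for some i
      rw [hone] at hsq hsum
      norm_num at hsq hsum
      have hprod : ∀ k : Fin r, 0 ≤ D k.succ * (D k.succ + 1) := by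
        intro k
        rcases le_or_gt 0 (D k.succ) with h | h
        · exact mul_nonneg h (by linarith)
        · calc (0:ℤ) ≤ (-(D k.succ + 1)) * (-(D k.succ)) :=
                mul_nonneg (by omega) (by omega)
            _ = D k.succ * (D k.succ + 1) := by ring
      have hzero : (∑ k : Fin r, D k.succ * (D k.succ + 1)) = 0 := by
        have e : (∑ k : Fin r, D k.succ * (D k.succ + 1))
            = (∑ k : Fin r, D k.succ * D k.succ) + ∑ k : Fin r, D k.succ := by
          rw [← Finset.sum_add_distrib]
          exact Finset.sum_congr rfl fun k _ => by ring
        rw [e, hsq, hsum]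
        ring
      have hall := (Finset.sum_eq_zero_iff_of_nonneg
        (fun k (_ : k ∈ Finset.univ) => hprod k)).1 hzero
      have hvals : ∀ k : Fin r, D k.succ = 0 ∨ D k.succ = -1 := by
        intro k
        rcases mul_eq_zero.1 (hall k (Finset.mem_univ k)) with h | h
        · exact Or.inl h
        · exact Or.inr (by omega)
      have hex : ∃ i : Fin r, D i.succ = -1 := by
        by_contra hno
        push_neg at hno
        have hz : ∀ k ∈ (Finset.univ : Finset (Fin r)), D k.succ = (0:ℤ) :=
          fun (k : Fin r) _ => (hvals k).resolve_right (hno k)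
        rw [Finset.sum_eq_zero hz] at hsum
        omega
      obtain ⟨i, hi⟩ := hex
      have herase : (∑ x ∈ Finset.univ.erase i, D x.succ) = 0 := by
        have := sum_split1 (fun k : Fin r => D k.succ) i
        rw [hsum, hi] at this
        linarith
      have hothers : ∀ k : Fin r, k ≠ i → D k.succ = 0 := by
        intro k hk
        exact (Finset.sum_eq_zero_iff_of_nonpos
          (fun x (_ : x ∈ Finset.univ.erase i) => hnp x)).1 herase k
          (Finset.mem_erase.2 ⟨hk, Finset.mem_univ k⟩)
      have hDeq : D = Evec r i.succ := by
        funext x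
        refine Fin.cases ?_ ?_ x
        · rw [Evec]
          simp only [if_pos rfl]
          exact hone
        · intro k
          rw [Evec]
          simp only [if_neg (Fin.succ_ne_zero k), Fin.succ_inj]
          by_cases hk : k = i
          · rw [if_pos hk, hk]; exact hi
          · rw [if_neg hk]; exact hothers k hk
      rw [hDeq]
      exact Evec_to_target i.succ q (Fin.succ_ne_zero i) hq
    · -- descent step
      have hd2 : 2 ≤ D 0 := by omega
      set M : Fin r → ℤ := fun k => -(D k.succ) with hM
      have hMnn : ∀ k, 0 ≤ M k := fun k => by
        rw [hM]; simp only; linarith [hnp k]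
      have hMsum : (∑ k, M k) = 3 * D 0 - 2 := by
        rw [hM, Finset.sum_neg_distrib, hsum]; ring
      have hMsq : (∑ k, M k * M k) = D 0 * D 0 := by
        rw [hM]
        have e : (∑ k : Fin r, -D k.succ * -D k.succ) = ∑ k : Fin r, D k.succ * D k.succ :=
          Finset.sum_congr rfl fun k _ => by ring
        rw [e, hsq]
      obtain ⟨i, j, k, hji, hki, hkj, htri⟩ :=
        exists_triple h1 h2 M hMnn (D 0) hd2 hMsum hMsq
      set α : Fin (r+1) → ℤ := fun x => if x = 0 then 1 else if x = i.succ then -1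
        else if x = j.succ then -1 else if x = k.succ then -1 else 0 with hαdef
      set gα : Fin r → ℤ := fun t => if t = i then -1 else if t = j then -1
        else if t = k then -1 else 0 with hgdef
      have hg : ∀ t : Fin r, α t.succ = gα t := fun t => by
        simp only [hαdef, hgdef, if_neg (Fin.succ_ne_zero t), Fin.succ_inj]
      have hα0 : α 0 = 1 := by simp [hαdef]
      have hgi : gα i = -1 := by simp [hgdef]
      have hgj : gα j = -1 := by simp [hgdef, hji]
      have hgk : gα k = -1 := by simp [hgdef, hki, hkj]
      have hrest3 : ∀ (f : Fin r → ℤ), (∀ x, x ≠ i → x ≠ j → x ≠ k → f x = 0) →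
          ∑ x ∈ ((Finset.univ.erase i).erase j).erase k, f x = 0 := by
        intro f hf
        apply Finset.sum_eq_zero
        intro x hx
        have h' := Finset.mem_erase.1 hx
        have h'' := Finset.mem_erase.1 h'.2
        exact hf x (Finset.mem_erase.1 h''.2).1 h''.1 h'.1
      have hgz : ∀ x : Fin r, x ≠ i → x ≠ j → x ≠ k → gα x = 0 := by
        intro x hxi hxj hxk
        simp only [hgdef, if_neg hxi, if_neg hxj, if_neg hxk]
      have hroot : IsRoot α := by
        constructor
        · show α 0 * α 0 - (∑ t : Fin r, α t.succ * α t.succ) = -2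
          have e : (∑ t : Fin r, α t.succ * α t.succ) = ∑ t : Fin r, gα t * gα t :=
            Finset.sum_congr rfl fun t _ => by rw [hg t]
          rw [e, sum_split3 (fun t => gα t * gα t) i j k hji hki hkj,
            hrest3 _ (fun x hxi hxj hxk => by rw [hgz x hxi hxj hxk]; ring),
            hα0, hgi, hgj, hgk]
          ring
        · show α 0 * negK 0 - (∑ t : Fin r, α t.succ * negK t.succ) = 0
          have e : (∑ t : Fin r, α t.succ * negK t.succ) = ∑ t : Fin r, gα t * (-1) :=
            Finset.sum_congr rfl fun t _ => by
              simp only [hg t, negK, if_neg (Fin.succ_ne_zero t)]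
          rw [e, sum_split3 (fun t => gα t * (-1)) i j k hji hki hkj,
            hrest3 _ (fun x hxi hxj hxk => by rw [hgz x hxi hxj hxk]; ring),
            hα0, hgi, hgj, hgk, negK]
          norm_num
      have hs : dpB D α = D 0 - (M i + M j + M k) := by
        show D 0 * α 0 - (∑ t : Fin r, D t.succ * α t.succ) = D 0 - (M i + M j + M k)
        have e : (∑ t : Fin r, D t.succ * α t.succ) = ∑ t : Fin r, D t.succ * gα t :=
          Finset.sum_congr rfl fun t _ => by rw [hg t]
        rw [e, sum_split3 (fun t => D t.succ * gα t) i j k hji hki hkj,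
          hrest3 _ (fun x hxi hxj hxk => by rw [hgz x hxi hxj hxk]; ring),
          hα0, hgi, hgj, hgk, hM]
        ring
      have hD' : IsRuling (reflct α D) := reflct_isRuling α D hroot hD
      have hD'0 : (reflct α D) 0 = 2 * D 0 - (M i + M j + M k) := by
        show D 0 + dpB D α * α 0 = _
        rw [hs, hα0]
        ring
      have hd1' : 1 ≤ (reflct α D) 0 := ruling_d0_pos h2 _ hD'
      have htn : ((reflct α D) 0).toNat ≤ n := by omega
      obtain ⟨L', hL', hfold⟩ := ih (reflct α D) hD' htn
      refine ⟨L' ++ [α], ?_, ?_⟩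
      · intro a ha
        rcases List.mem_append.1 ha with h | h
        · exact hL' a h
        · rw [List.mem_singleton.1 h]
          exact hroot
      · rw [List.foldr_append]
        exact hfold

/-- The group generated by the reflections in roots acts transitively on rulings:
some word in the reflections carries any ruling to any other. -/
theorem stmt12 (r : ℕ) (h1 : 4 ≤ r) (h2 : r ≤ 8) (D1 D2 : Fin (r + 1) → ℤ)
    (hD1 : IsRuling D1) (hD2 : IsRuling D2) :
    ∃ L : List (Fin (r + 1) → ℤ), (∀ a ∈ L, IsRoot a) ∧
      L.foldr (fun a x => reflct a x) D1 = D2 := by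
  have hq : (⟨1, by omega⟩ : Fin (r+1)) ≠ 0 := by
    intro h
    have := congrArg Fin.val h
    simp at this
  obtain ⟨L1, hL1, hf1⟩ := descent h1 h2 ⟨1, by omega⟩ hq (D1 0).toNat D1 hD1 le_rfl
  obtain ⟨L2, hL2, hf2⟩ := descent h1 h2 ⟨1, by omega⟩ hq (D2 0).toNat D2 hD2 le_rfl
  refine ⟨L2.reverse ++ L1, ?_, ?_⟩
  · intro a ha
    rcases List.mem_append.1 ha with h | h
    · exact hL2 a (List.mem_reverse.1 h)
    · exact hL1 a h
  · rw [List.foldr_append, hf1, ← hf2, foldr_reverse_inv L2 hL2 D2]
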